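/- Let b : D → D be holomorphic, α unimodular, σ_α the Clark measure of b. For g ∈ L²(σ_α) define (V g)(z) = (1 − conj(α) b(z)) · ∫_T g(ζ)/(1 − z conj(ζ)) dσ_α(ζ) for z ∈ D. Then V C(·,w) = (1 − α conj(b(w)))^{-1} k_b(·,w) for every w ∈ D, where C(ζ,w) = 1/(1 − ζ conj(w)) and k_b is the reproducing kernel of H(b). -/

import Mathlib

open Complex Metric MeasureTheory Set

open ComplexConjugate

/-!
By `2 Re (1 - u)⁻¹ - 1 = (1 - |u|²)/|1 - u|²`, the Clark condition says that `2 Re σ₊ - σ(𝕋)`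
and `2 Re (1 - ᾱ b)⁻¹ - 1` agree on the disc. So the holomorphic function `σ₊ - (1 - ᾱ b)⁻¹`
has constant real part, hence is a constant `C`, and `2 Re C = σ(𝕋) - 1`.

For `|ζ| = 1` the partial fraction identity
`(1 - a)⁻¹ + (1 - b)⁻¹ - 1 = (1 - a b) (1 - a)⁻¹ (1 - b)⁻¹`
with `a = z ζ̄`, `b = ζ w̄`, `a b = z w̄` turns `∫ C(ζ,w) (1 - z ζ̄)⁻¹ dσ` into
`(1 - z w̄)⁻¹ (σ₊(z) + conj σ₊(w) - σ(𝕋))`. Inserting `σ₊ = (1 - ᾱ b)⁻¹ + C`, the constant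
cancels, and the same identity with `a = ᾱ b(z)`, `b = α conj b(w)`, `a b = b(z) conj b(w)`
produces `k_b(z,w)`.
-/

lemma one_sub_ne_zero_of_norm_lt_one {R : Type*} [NormedRing R] [NormOneClass R] {x : R}
    (hx : ‖x‖ < 1) : 1 - x ≠ 0 :=
  sub_ne_zero.2 fun h ↦ by simp [← h] at hx

lemma norm_mul_conj_le_norm (z : ℂ) {ζ : ℂ} (hζ : ‖ζ‖ ≤ 1) : ‖z * conj ζ‖ ≤ ‖z‖ := by
  rw [norm_mul, RCLike.norm_conj]
  exact mul_le_of_le_one_right (norm_nonneg z) hζ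

lemma one_sub_norm_le_norm_one_sub_mul_conj (z : ℂ) {ζ : ℂ} (hζ : ‖ζ‖ ≤ 1) :
    1 - ‖z‖ ≤ ‖1 - z * conj ζ‖ := by
  have := norm_sub_norm_le 1 (z * conj ζ)
  rw [norm_one] at this
  linarith [norm_mul_conj_le_norm z hζ]

lemma hasDerivAt_inv_one_sub_mul {𝕜 : Type*} [NontriviallyNormedField 𝕜] (c : 𝕜) {x : 𝕜}
    (hx : 1 - x * c ≠ 0) :
    HasDerivAt (fun y ↦ (1 - y * c)⁻¹) (c / (1 - x * c) ^ 2) x := by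
  have h : HasDerivAt (fun y ↦ 1 - y * c) (-c) x := by
    simpa using ((hasDerivAt_id x).mul_const c).const_sub 1
  simpa using h.fun_inv hx

lemma inv_add_inv_sub_one {K : Type*} [Field K] {a b : K} (ha : 1 - a ≠ 0) (hb : 1 - b ≠ 0) :
    (1 - a)⁻¹ + (1 - b)⁻¹ - 1 = (1 - a * b) * ((1 - a)⁻¹ * (1 - b)⁻¹) := by
  field_simp
  ring

lemma mul_conj_eq_one_of_norm_eq_one {ζ : ℂ} (hζ : ‖ζ‖ = 1) : ζ * conj ζ = 1 := by
  rw [Complex.mul_conj', hζ]; simp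

lemma norm_mul_conj_of_norm_eq_one (z : ℂ) {ζ : ℂ} (hζ : ‖ζ‖ = 1) : ‖z * conj ζ‖ = ‖z‖ := by
  rw [norm_mul, RCLike.norm_conj, hζ, mul_one]

lemma two_mul_re_inv_one_sub_sub_one {u : ℂ} (hu : 1 - u ≠ 0) :
    2 * ((1 - u)⁻¹).re - 1 = (1 - ‖u‖ ^ 2) / ‖1 - u‖ ^ 2 := by
  have hsq : ‖1 - u‖ ^ 2 = 1 - 2 * u.re + ‖u‖ ^ 2 := by
    simp only [Complex.sq_norm, Complex.normSq_apply, Complex.sub_re, Complex.sub_im,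
      Complex.one_re, Complex.one_im]
    ring
  rw [Complex.inv_re, ← Complex.sq_norm, Complex.sub_re, Complex.one_re]
  field_simp [pow_ne_zero 2 (norm_ne_zero_iff.2 hu)]
  linear_combination -hsq

lemma two_mul_re_inv_one_sub_mul_conj_sub_one {z ζ : ℂ} (hζ : ‖ζ‖ = 1) (hz : ‖z‖ < 1) :
    2 * ((1 - z * conj ζ)⁻¹).re - 1 = (1 - ‖z‖ ^ 2) / ‖ζ - z‖ ^ 2 := by
  have hζz : 1 - z * conj ζ = conj ζ * (ζ - z) := by
    linear_combination -mul_conj_eq_one_of_norm_eq_one hζ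
  rw [two_mul_re_inv_one_sub_sub_one (one_sub_ne_zero_of_norm_lt_one (by
      rwa [norm_mul_conj_of_norm_eq_one z hζ])), norm_mul_conj_of_norm_eq_one z hζ, hζz,
    norm_mul, RCLike.norm_conj, hζ, one_mul]

lemma exists_eqOn_const_of_re_eqOn_const {f : ℂ → ℂ} {U : Set ℂ} (hU : IsOpen U)
    (hUc : IsPreconnected U) (hf : DifferentiableOn ℂ f U) {c : ℝ}
    (hre : ∀ z ∈ U, (f z).re = c) : ∃ w, ∀ z ∈ U, f z = w := by
  rcases U.eq_empty_or_nonempty with rfl | ⟨z₀, hz₀⟩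
  · exact ⟨0, by simp⟩
  refine ((hf.analyticOnNhd hU).is_constant_or_isOpen hUc).resolve_right fun hopen ↦ ?_
  have himage : f '' U ⊆ interior (re ⁻¹' {c}) :=
    interior_maximal (by rintro _ ⟨z, hz, rfl⟩; exact hre z hz) (hopen U subset_rfl hU)
  rw [interior_preimage_re, interior_singleton, preimage_empty] at himage
  exact himage ⟨z₀, hz₀, rfl⟩

lemma norm_inv_one_sub_mul_conj_le {z ζ : ℂ} {r : ℝ} (hr : 0 < r) (hz : ‖z‖ ≤ 1 - r)
    (hζ : ‖ζ‖ ≤ 1) : ‖(1 - z * conj ζ)⁻¹‖ ≤ r⁻¹ := by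
  rw [norm_inv]
  exact inv_anti₀ hr (by linarith [one_sub_norm_le_norm_one_sub_mul_conj z hζ])

noncomputable def cauchyTransform (μ : Measure ℂ) (z : ℂ) : ℂ := ∫ ζ, (1 - z * conj ζ)⁻¹ ∂μ

section CauchyTransform

variable {μ : Measure ℂ}

lemma aestronglyMeasurable_inv_one_sub_mul_conj (z : ℂ) :
    AEStronglyMeasurable (fun ζ ↦ (1 - z * conj ζ)⁻¹) μ := by
  fun_prop

lemma integrable_inv_one_sub_mul_conj [IsFiniteMeasure μ] (hμ : ∀ᵐ ζ ∂μ, ‖ζ‖ ≤ 1) {z : ℂ}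
    (hz : ‖z‖ < 1) : Integrable (fun ζ ↦ (1 - z * conj ζ)⁻¹) μ :=
  (integrable_const (1 - ‖z‖)⁻¹).mono' (aestronglyMeasurable_inv_one_sub_mul_conj z)
    (hμ.mono fun _ hζ ↦ norm_inv_one_sub_mul_conj_le (by linarith) (sub_sub_cancel _ _).ge hζ)

lemma differentiableOn_cauchyTransform [IsFiniteMeasure μ] (hμ : ∀ᵐ ζ ∂μ, ‖ζ‖ ≤ 1) :
    DifferentiableOn ℂ (cauchyTransform μ) (ball 0 1) := by
  intro x₀ hx₀
  rw [mem_ball_zero_iff] at hx₀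
  set ε := (1 - ‖x₀‖) / 2 with hε
  have hεpos : 0 < ε := by linarith
  have hnear : ∀ x ∈ ball x₀ ε, ‖x‖ ≤ 1 - ε := fun x hx ↦ by
    linarith [norm_le_norm_add_norm_sub' x x₀, mem_ball_iff_norm.1 hx]
  refine (hasDerivAt_integral_of_dominated_loc_of_deriv_le (ball_mem_nhds x₀ hεpos)
    (.of_forall aestronglyMeasurable_inv_one_sub_mul_conj)
    (integrable_inv_one_sub_mul_conj hμ (by linarith))
    (F' := fun x ζ ↦ conj ζ / (1 - x * conj ζ) ^ 2)
    (Measurable.aestronglyMeasurable (by fun_prop))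
    (bound := fun _ ↦ (ε ^ 2)⁻¹) ?_ (integrable_const _)
    ?_).2.differentiableAt.differentiableWithinAt
  · filter_upwards [hμ] with ζ hζ x hx
    have h := norm_inv_one_sub_mul_conj_le hεpos (hnear x hx) hζ
    rw [norm_inv] at h
    rw [norm_div, norm_pow, RCLike.norm_conj, div_eq_mul_inv, ← inv_pow, ← one_mul (ε ^ 2)⁻¹,
      ← inv_pow]
    gcongr
  · filter_upwards [hμ] with ζ hζ x hx
    exact hasDerivAt_inv_one_sub_mul _ (one_sub_ne_zero_of_norm_lt_one
      ((norm_mul_conj_le_norm x hζ).trans_lt (by linarith [hnear x hx])))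

lemma inv_one_sub_mul_conj_eq_conj (ζ w : ℂ) :
    (1 - ζ * conj w)⁻¹ = conj ((1 - w * conj ζ)⁻¹) := by
  simp [mul_comm]

lemma integrable_inv_one_sub_mul_conj_const [IsFiniteMeasure μ] (hμ : ∀ᵐ ζ ∂μ, ‖ζ‖ ≤ 1) {w : ℂ}
    (hw : ‖w‖ < 1) : Integrable (fun ζ ↦ (1 - ζ * conj w)⁻¹) μ := by
  rw [funext fun ζ ↦ inv_one_sub_mul_conj_eq_conj ζ w]
  exact (conjCLE : ℂ →L[ℝ] ℂ).integrable_comp (integrable_inv_one_sub_mul_conj hμ hw)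

lemma integral_inv_one_sub_mul_conj_const (w : ℂ) :
    ∫ ζ, (1 - ζ * conj w)⁻¹ ∂μ = conj (cauchyTransform μ w) := by
  rw [funext fun ζ ↦ inv_one_sub_mul_conj_eq_conj ζ w, integral_conj, cauchyTransform]

lemma two_mul_re_cauchyTransform_sub_measureReal [IsFiniteMeasure μ] (hμ : ∀ᵐ ζ ∂μ, ‖ζ‖ = 1)
    {z : ℂ} (hz : ‖z‖ < 1) :
    2 * (cauchyTransform μ z).re - μ.real univ = ∫ ζ, (1 - ‖z‖ ^ 2) / ‖ζ - z‖ ^ 2 ∂μ := by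
  have hint := integrable_inv_one_sub_mul_conj (hμ.mono fun _ h ↦ h.le) hz
  rw [← integral_congr_ae (hμ.mono fun ζ hζ ↦ two_mul_re_inv_one_sub_mul_conj_sub_one hζ hz),
    integral_sub ?_ (integrable_const 1), integral_const_mul, integral_const, smul_eq_mul,
    mul_one, cauchyTransform]
  · exact congrArg (2 * · - _) (integral_re hint).symm
  · exact hint.re.const_mul 2

lemma integral_inv_one_sub_mul_conj_mul_inv [IsFiniteMeasure μ] (hμ : ∀ᵐ ζ ∂μ, ‖ζ‖ = 1)
    {z w : ℂ} (hz : ‖z‖ < 1) (hw : ‖w‖ < 1) :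
    ∫ ζ, (1 - ζ * conj w)⁻¹ * (1 - z * conj ζ)⁻¹ ∂μ =
      (1 - z * conj w)⁻¹ * (cauchyTransform μ z + conj (cauchyTransform μ w) - μ.real univ) := by
  have hzw : 1 - z * conj w ≠ 0 :=
    one_sub_ne_zero_of_norm_lt_one ((norm_mul_conj_le_norm z hw.le).trans_lt hz)
  have hpartial : ∀ᵐ ζ ∂μ, (1 - ζ * conj w)⁻¹ * (1 - z * conj ζ)⁻¹ =
      (1 - z * conj w)⁻¹ * ((1 - z * conj ζ)⁻¹ + (1 - ζ * conj w)⁻¹ - 1) := by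
    filter_upwards [hμ] with ζ hζ
    have hz' : 1 - z * conj ζ ≠ 0 :=
      one_sub_ne_zero_of_norm_lt_one (by rwa [norm_mul_conj_of_norm_eq_one z hζ])
    have hw' : 1 - ζ * conj w ≠ 0 :=
      one_sub_ne_zero_of_norm_lt_one (by rwa [norm_mul, RCLike.norm_conj, hζ, one_mul])
    have hprod : z * conj ζ * (ζ * conj w) = z * conj w := by
      linear_combination (z * conj w) * mul_conj_eq_one_of_norm_eq_one hζ
    rw [inv_add_inv_sub_one hz' hw', hprod, ← mul_assoc, inv_mul_cancel₀ hzw, one_mul, mul_comm]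
  have hint := integrable_inv_one_sub_mul_conj (hμ.mono fun _ h ↦ h.le) hz
  have hint' := integrable_inv_one_sub_mul_conj_const (hμ.mono fun _ h ↦ h.le) hw
  rw [integral_congr_ae hpartial, integral_const_mul, integral_sub (hint.fun_add hint')
    (integrable_const 1), integral_add hint hint', integral_const,
    integral_inv_one_sub_mul_conj_const]
  simp [cauchyTransform]

theorem exists_cauchyTransform_eq_inv_add_const [IsFiniteMeasure μ] (hμ : ∀ᵐ ζ ∂μ, ‖ζ‖ = 1)
    {b : ℂ → ℂ} (hb : DifferentiableOn ℂ b (ball 0 1)) (hbmap : MapsTo b (ball 0 1) (ball 0 1))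
    {α : ℂ} (hα : ‖α‖ = 1)
    (hclark : ∀ z ∈ ball (0 : ℂ) 1,
      ∫ ζ, (1 - ‖z‖ ^ 2) / ‖ζ - z‖ ^ 2 ∂μ = (1 - ‖b z‖ ^ 2) / ‖α - b z‖ ^ 2) :
    ∃ C : ℂ, 2 * C.re = μ.real univ - 1 ∧
      ∀ z ∈ ball (0 : ℂ) 1, cauchyTransform μ z = (1 - conj α * b z)⁻¹ + C := by
  have hbα : ∀ z ∈ ball (0 : ℂ) 1, 1 - conj α * b z ≠ 0 := fun z hz ↦
    one_sub_ne_zero_of_norm_lt_one (by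
      rw [mul_comm, norm_mul_conj_of_norm_eq_one _ hα]; exact mem_ball_zero_iff.1 (hbmap hz))
  set f := fun z ↦ cauchyTransform μ z - (1 - conj α * b z)⁻¹ with hf_def
  have hf : DifferentiableOn ℂ f (ball 0 1) :=
    (differentiableOn_cauchyTransform (hμ.mono fun _ h ↦ h.le)).sub
      (((differentiableOn_const 1).sub (hb.const_mul _)).inv hbα)
  have hre : ∀ z ∈ ball (0 : ℂ) 1, (f z).re = (μ.real univ - 1) / 2 := by
    intro z hz
    have hcauchy := two_mul_re_cauchyTransform_sub_measureReal hμ (mem_ball_zero_iff.1 hz)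
    have hb := two_mul_re_inv_one_sub_mul_conj_sub_one hα (mem_ball_zero_iff.1 (hbmap hz))
    rw [hclark z hz] at hcauchy
    rw [mul_comm (b z)] at hb
    simp only [hf_def, sub_re]
    linarith
  obtain ⟨C, hC⟩ := exists_eqOn_const_of_re_eqOn_const isOpen_ball
    (convex_ball 0 1).isPreconnected hf hre
  refine ⟨C, ?_, fun z hz ↦ ?_⟩
  · rw [← hC 0 (mem_ball_self one_pos), hre 0 (mem_ball_self one_pos)]
    ring
  · rw [← hC z hz, hf_def]
    ring

lemma cauchyTransform_add_conj_sub_measureReal [IsFiniteMeasure μ] (hμ : ∀ᵐ ζ ∂μ, ‖ζ‖ = 1)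
    {b : ℂ → ℂ} (hb : DifferentiableOn ℂ b (ball 0 1)) (hbmap : MapsTo b (ball 0 1) (ball 0 1))
    {α : ℂ} (hα : ‖α‖ = 1)
    (hclark : ∀ z ∈ ball (0 : ℂ) 1,
      ∫ ζ, (1 - ‖z‖ ^ 2) / ‖ζ - z‖ ^ 2 ∂μ = (1 - ‖b z‖ ^ 2) / ‖α - b z‖ ^ 2)
    {z w : ℂ} (hz : z ∈ ball (0 : ℂ) 1) (hw : w ∈ ball (0 : ℂ) 1) :
    cauchyTransform μ z + conj (cauchyTransform μ w) - μ.real univ =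
      (1 - conj α * b z)⁻¹ + (1 - α * conj (b w))⁻¹ - 1 := by
  obtain ⟨C, hCre, hC⟩ := exists_cauchyTransform_eq_inv_add_const hμ hb hbmap hα hclark
  have hCconj : C + conj C = μ.real univ - 1 := by
    rw [add_conj, hCre]
    push_cast
    ring
  rw [hC z hz, hC w hw, map_add, map_inv₀, map_sub, map_one, map_mul, conj_conj]
  linear_combination hCconj

end CauchyTransform

/-- With `σ_α` the Clark measure of `b` and `(V g)(z) = (1 - conj α · b z) (g σ_α)₊(z)`,
one has `V C(·,w) = (1 - α conj (b w))⁻¹ k_b(·,w)` for every `w` in the disc, where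
`C(ζ,w) = (1 - ζ conj w)⁻¹` and `k_b(z,w) = (1 - b z conj (b w))/(1 - z conj w)`. -/
theorem stmt5 (b : ℂ → ℂ)
    (hb : DifferentiableOn ℂ b (ball (0 : ℂ) 1))
    (hbmap : ∀ z ∈ ball (0 : ℂ) 1, b z ∈ ball (0 : ℂ) 1)
    (α : ℂ) (hα : ‖α‖ = 1)
    (σ : Measure ℂ) (hσfin : IsFiniteMeasure σ)
    (hσsupp : σ (sphere (0 : ℂ) 1)ᶜ = 0)
    (hσ : ∀ z ∈ ball (0 : ℂ) 1,
      ∫ ζ, (1 - ‖z‖ ^ 2) / ‖ζ - z‖ ^ 2 ∂σ = (1 - ‖b z‖ ^ 2) / ‖α - b z‖ ^ 2) :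
    ∀ w ∈ ball (0 : ℂ) 1, ∀ z ∈ ball (0 : ℂ) 1,
      (1 - (starRingEnd ℂ) α * b z) *
          ∫ ζ, (1 - ζ * (starRingEnd ℂ) w)⁻¹ * (1 - z * (starRingEnd ℂ) ζ)⁻¹ ∂σ =
        (1 - α * (starRingEnd ℂ) (b w))⁻¹ *
          ((1 - b z * (starRingEnd ℂ) (b w)) * (1 - z * (starRingEnd ℂ) w)⁻¹) := by
  intro w hw z hz
  have hσT : ∀ᵐ ζ ∂σ, ‖ζ‖ = 1 := by
    have hsphere : ∀ᵐ ζ ∂σ, ζ ∈ sphere (0 : ℂ) 1 := mem_ae_iff.2 hσsupp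
    exact hsphere.mono fun _ ↦ mem_sphere_zero_iff_norm.1
  have hp : 1 - conj α * b z ≠ 0 := one_sub_ne_zero_of_norm_lt_one (by
    rw [mul_comm, norm_mul_conj_of_norm_eq_one _ hα]; exact mem_ball_zero_iff.1 (hbmap z hz))
  have hq : 1 - α * conj (b w) ≠ 0 := one_sub_ne_zero_of_norm_lt_one (by
    rw [norm_mul, RCLike.norm_conj, hα, one_mul]; exact mem_ball_zero_iff.1 (hbmap w hw))
  have hαb : conj α * b z * (α * conj (b w)) = b z * conj (b w) := by
    linear_combination b z * conj (b w) * mul_conj_eq_one_of_norm_eq_one hα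
  rw [integral_inv_one_sub_mul_conj_mul_inv hσT (mem_ball_zero_iff.1 hz) (mem_ball_zero_iff.1 hw),
    cauchyTransform_add_conj_sub_measureReal hσT hb hbmap hα hσ hz hw,
    inv_add_inv_sub_one hp hq, hαb]
  field_simp
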